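/- Let (θ_n) be generated by the stochastic approximation recursion θ_n = θ_{n−1} + γ_n H_n where (γ_n) is a sequence of positive reals with Σγ_n² < ∞ and Σγ_n = ∞, and suppose ‖H_n‖ ≤ B almost surely for all n and ‖θ_n − θ*‖ → 0 almost surely for some θ* ∈ ℝ^{d_θ}. Then for any positive probability mass functions 𝕡 on ℕ₀ with an increasing integer sequence T_p → ∞ and with E[ Σ_p 𝕡(p)^{-1}·𝕡(p)·(θ_{T_p} − θ_{T_{p−1}}) ] well-defined (e.g., Σ_p E‖θ_{T_p} − θ_{T_{p−1}}‖ < ∞), the single-term randomized estimator θ̂ = (θ_{T_P} − θ_{T_{P−1}})/𝕡(P) (with θ_{T_{−1}} := 0, P ~ 𝕡 independent of the chain) satisfies E[θ̂] = θ*. -/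

import Mathlib

/-!
Integrate over the index first (Fubini). Writing `Δ k = θ (T k) - θ (T (k - 1))` (with
`θ (T (-1)) = 0`), for almost every `ω` the `ν`-integral of `k ↦ (p k)⁻¹ • Δ k ω` is
`∑' k, Δ k ω`, which telescopes to `lim θ (T n) ω = θstar`. Integrability on the product measure
is exactly the summability of `∫ ‖Δ k‖ ∂μ`.
-/

open MeasureTheory Filter Topology

section Telescoping

variable {E : Type*} [NormedAddCommGroup E]

theorem sum_range_succ_sub_prev (u : ℕ → E) (n : ℕ) :
    ∑ k ∈ Finset.range (n + 1), (u k - if k = 0 then 0 else u (k - 1)) = u n := by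
  induction n with
  | zero => simp
  | succ n ih => rw [Finset.sum_range_succ, ih]; simp

theorem hasSum_sub_prev_of_tendsto [CompleteSpace E] {u : ℕ → E} {a : E}
    (hu : Tendsto u atTop (𝓝 a))
    (hs : Summable fun k => ‖u k - if k = 0 then 0 else u (k - 1)‖) :
    HasSum (fun k => u k - if k = 0 then 0 else u (k - 1)) a := by
  rw [hasSum_iff_tendsto_nat_of_summable_norm hs, ← tendsto_add_atTop_iff_nat 1]
  simpa only [sum_range_succ_sub_prev] using hu

end Telescoping

section WeightedCountable

variable {α E : Type*} [MeasurableSpace α] [Countable α] [MeasurableSingletonClass α]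
  [NormedAddCommGroup E] [NormedSpace ℝ E]
  {ν : Measure α} {p : α → ℝ}

theorem integrable_inv_smul_iff_summable_norm (hp : ∀ a, 0 < p a)
    (hν : ∀ a, ν {a} = ENNReal.ofReal (p a)) {f : α → E} :
    Integrable (fun a => (p a)⁻¹ • f a) ν ↔ Summable (‖f ·‖) := by
  rw [← integrable_count_iff, Integrable, Integrable, HasFiniteIntegral, HasFiniteIntegral,
    lintegral_countable', lintegral_countable']
  have hweight : ∀ a, ‖(p a)⁻¹ • f a‖ₑ * ν {a} = ‖f a‖ₑ * Measure.count {a} := by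
    intro a
    have hinv := (inv_pos.2 (hp a)).le
    rw [hν, Measure.count_singleton, mul_one, enorm_smul, mul_right_comm,
      Real.enorm_eq_ofReal hinv, ← ENNReal.ofReal_mul hinv, inv_mul_cancel₀ (hp a).ne',
      ENNReal.ofReal_one, one_mul]
  simp only [hweight, StronglyMeasurable.of_discrete.aestronglyMeasurable]

theorem integral_inv_smul_eq_tsum [CompleteSpace E] (hp : ∀ a, 0 < p a)
    (hν : ∀ a, ν {a} = ENNReal.ofReal (p a)) {f : α → E}
    (hf : Integrable (fun a => (p a)⁻¹ • f a) ν) :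
    ∫ a, (p a)⁻¹ • f a ∂ν = ∑' a, f a := by
  rw [integral_countable hf]
  refine tsum_congr fun a => ?_
  rw [measureReal_def, hν, ENNReal.toReal_ofReal (hp a).le, smul_smul,
    mul_inv_cancel₀ (hp a).ne', one_smul]

end WeightedCountable

section ProdCountable

variable {α β E : Type*} [MeasurableSpace α] [MeasurableSpace β] [Countable β]
  [MeasurableSingletonClass β] [NormedAddCommGroup E]

theorem stronglyMeasurable_prod_countable {F : β → α → E} (hF : ∀ b, StronglyMeasurable (F b)) :
    StronglyMeasurable fun z : α × β => F z.2 z.1 := by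
  borelize E
  refine stronglyMeasurable_iff_measurable_separable.2
    ⟨measurable_from_prod_countable_left fun b => (hF b).measurable, ?_⟩
  refine (TopologicalSpace.IsSeparable.iUnion fun b => (hF b).isSeparable_range).mono ?_
  rintro _ ⟨⟨a, b⟩, rfl⟩
  exact Set.mem_iUnion.2 ⟨b, a, rfl⟩

theorem aestronglyMeasurable_prod_countable {μ : Measure α} {ν : Measure β} [SFinite ν]
    {F : β → α → E} (hF : ∀ b, AEStronglyMeasurable (F b) μ) :
    AEStronglyMeasurable (fun z : α × β => F z.2 z.1) (μ.prod ν) := by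
  refine ⟨_, stronglyMeasurable_prod_countable fun b => (hF b).stronglyMeasurable_mk, ?_⟩
  filter_upwards [Measure.quasiMeasurePreserving_fst.ae
    (ae_all_iff.2 fun b => (hF b).ae_eq_mk)] with z hz using hz z.2

end ProdCountable

theorem integrable_prod_inv_smul {α β E : Type*} [MeasurableSpace α] [MeasurableSpace β]
    [Countable β] [MeasurableSingletonClass β] [NormedAddCommGroup E] [NormedSpace ℝ E]
    {μ : Measure α} [SFinite μ] {ν : Measure β} [SFinite ν] {p : β → ℝ} (hp : ∀ b, 0 < p b)
    (hν : ∀ b, ν {b} = ENNReal.ofReal (p b)) {F : β → α → E} (hF : ∀ b, Integrable (F b) μ)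
    (hs : Summable fun b => ∫ a, ‖F b a‖ ∂μ) :
    Integrable (fun z : α × β => (p z.2)⁻¹ • F z.2 z.1) (μ.prod ν) := by
  have hmeas : ∀ b, AEStronglyMeasurable (fun a => (p b)⁻¹ • F b a) μ :=
    fun b => (hF b).aestronglyMeasurable.const_smul _
  refine (integrable_prod_iff' (aestronglyMeasurable_prod_countable hmeas)).2
    ⟨ae_of_all _ fun b => Integrable.smul (p b)⁻¹ (hF b), ?_⟩
  have hnorm : ∀ b, ∫ a, ‖(p b)⁻¹ • F b a‖ ∂μ = (p b)⁻¹ • ∫ a, ‖F b a‖ ∂μ := fun b => by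
    simp only [norm_smul, Real.norm_of_nonneg (inv_pos.2 (hp b)).le, smul_eq_mul,
      integral_const_mul]
  simp only [hnorm]
  refine (integrable_inv_smul_iff_summable_norm hp hν).2 (hs.congr fun b => ?_)
  exact (Real.norm_of_nonneg (integral_nonneg fun a => norm_nonneg _)).symm

theorem stmt15_general (dθ : ℕ) {Ω : Type*} [MeasurableSpace Ω]
    (μ : Measure Ω) [IsProbabilityMeasure μ]
    (θ : ℕ → Ω → EuclideanSpace ℝ (Fin dθ))
    (θstar : EuclideanSpace ℝ (Fin dθ))
    (hconv : ∀ᵐ ω ∂μ, Tendsto (fun n => θ n ω) atTop (nhds θstar))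
    (T : ℕ → ℕ) (hT : StrictMono T)
    (p : ℕ → ℝ) (hp : ∀ k, 0 < p k)
    (ν : Measure ℕ) [SigmaFinite ν] (hν : ∀ k, ν {k} = ENNReal.ofReal (p k))
    (hL1 : ∀ n, Integrable (θ n) μ)
    (hsumL1 : Summable fun k =>
      ∫ ω, ‖θ (T k) ω - (if k = 0 then 0 else θ (T (k-1)) ω)‖ ∂μ) :
    Integrable (fun z : Ω × ℕ =>
        (p z.2)⁻¹ • (θ (T z.2) z.1 - (if z.2 = 0 then 0 else θ (T (z.2-1)) z.1)))
      (μ.prod ν) ∧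
    (∫ z : Ω × ℕ,
        (p z.2)⁻¹ • (θ (T z.2) z.1 - (if z.2 = 0 then 0 else θ (T (z.2-1)) z.1))
        ∂(μ.prod ν)) = θstar := by
  have hdiff : ∀ k, Integrable (fun ω => θ (T k) ω - if k = 0 then 0 else θ (T (k-1)) ω) μ := by
    rintro (_ | k)
    · simpa using hL1 (T 0)
    · simp only [Nat.add_one_ne_zero, if_false, Nat.add_sub_cancel]
      exact (hL1 (T (k + 1))).sub (hL1 (T k))
  have hint := integrable_prod_inv_smul hp hν hdiff hsumL1
  refine ⟨hint, ?_⟩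
  have hslice : ∀ᵐ ω ∂μ, ∫ k, (p k)⁻¹ • (θ (T k) ω - if k = 0 then 0 else θ (T (k-1)) ω) ∂ν
      = θstar := by
    filter_upwards [hint.prod_right_ae, hconv] with ω hω hθ
    rw [integral_inv_smul_eq_tsum hp hν hω]
    exact (hasSum_sub_prev_of_tendsto (hθ.comp hT.tendsto_atTop)
      ((integrable_inv_smul_iff_summable_norm hp hν).1 hω)).tsum_eq
  rw [integral_prod _ hint, integral_congr_ae hslice, integral_const, probReal_univ, one_smul]

/-- Unbiasedness of the single-term randomized estimator built from a converging
Markovian stochastic approximation sequence. -/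
theorem stmt15 (dθ : ℕ) {Ω : Type*} [MeasurableSpace Ω]
    (μ : Measure Ω) [IsProbabilityMeasure μ]
    (γ : ℕ → ℝ) (hγpos : ∀ n, 0 < γ n)
    (hγ2 : Summable fun n => (γ n)^2) (hγ1 : ¬ Summable γ)
    (θ H : ℕ → Ω → EuclideanSpace ℝ (Fin dθ))
    (B : ℝ)
    (hrec : ∀ n ω, θ (n+1) ω = θ n ω + γ (n+1) • H (n+1) ω)
    (hH : ∀ n, ∀ᵐ ω ∂μ, ‖H n ω‖ ≤ B)
    (θstar : EuclideanSpace ℝ (Fin dθ))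
    (hconv : ∀ᵐ ω ∂μ, Tendsto (fun n => θ n ω) atTop (nhds θstar))
    (T : ℕ → ℕ) (hT : StrictMono T)
    (p : ℕ → ℝ) (hp : ∀ k, 0 < p k) (hpsum : ∑' k, p k = 1)
    (ν : Measure ℕ) [SigmaFinite ν] (hν : ∀ k, ν {k} = ENNReal.ofReal (p k))
    (hL1 : ∀ n, Integrable (θ n) μ)
    (hsumL1 : Summable fun k =>
      ∫ ω, ‖θ (T k) ω - (if k = 0 then 0 else θ (T (k-1)) ω)‖ ∂μ) :
    Integrable (fun z : Ω × ℕ =>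
        (p z.2)⁻¹ • (θ (T z.2) z.1 - (if z.2 = 0 then 0 else θ (T (z.2-1)) z.1)))
      (μ.prod ν) ∧
    (∫ z : Ω × ℕ,
        (p z.2)⁻¹ • (θ (T z.2) z.1 - (if z.2 = 0 then 0 else θ (T (z.2-1)) z.1))
        ∂(μ.prod ν)) = θstar :=
  stmt15_general dθ μ θ θstar hconv T hT p hp ν hν hL1 hsumL1
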